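/- The family (f_{m,n})_{m ∈ ℤ, n ∈ ℕ} is orthonormal in L²(ℝ²; ℂ): for all m, m' ∈ ℤ and n, n' ∈ ℕ, ∫_{ℝ²} conj(f_{m,n}(z)) f_{m',n'}(z) dz = 1 if (m,n) = (m',n') and = 0 otherwise. -/

import Mathlib

open MeasureTheory

/-- Generalized Laguerre polynomial
`L_n^α(x) = Σ_{k=0}^n (-1)^k binom(n+α, n-k) x^k / k!`, where
`binom(n+α, n-k) = Γ(n+α+1)/(Γ(α+k+1)·(n-k)!)`. -/
noncomputable def laguerre (α : ℝ) (n : ℕ) (x : ℝ) : ℝ :=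
  ∑ k ∈ Finset.range (n + 1),
    (-1 : ℝ) ^ k *
      (Real.Gamma ((n : ℝ) + α + 1) /
        (Real.Gamma (α + (k : ℝ) + 1) * (Nat.factorial (n - k) : ℝ))) *
      x ^ k / (Nat.factorial k : ℝ)

/-- The eigenfunctions `f_{m,n}` of the free Weyl operator with homogeneous
magnetic field, identifying `ℝ²` with `ℂ`. -/
noncomputable def fmn (m : ℤ) (n : ℕ) (z : ℂ) : ℂ :=
  (Real.sqrt ((Nat.factorial n : ℝ) / (Real.pi * (Nat.factorial (n + m.natAbs) : ℝ))) : ℂ) *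
    (Real.exp (-(‖z‖) ^ 2 / 2) : ℂ) *
    (if 0 ≤ m then z ^ m.natAbs else (starRingEnd ℂ z) ^ m.natAbs) *
    ((laguerre (m.natAbs : ℝ) n ((‖z‖) ^ 2) : ℝ) : ℂ)

/-!
In polar coordinates `z = r e^{iθ}` one has `f_{m,n}(z) = R_{m,n}(r) e^{imθ}` with `R_{m,n}` real,
so the integral of `conj f_{m,n} · f_{m',n'}` factors into the angular integral
`∫ e^{i(m'-m)θ} dθ = 2π δ_{m,m'}` and, for `m = m'`, a radial integral which the substitution
`t = r²` turns into the Laguerre orthogonality relation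
`∫₀^∞ tᵃ e^{-t} L_nᵃ(t) L_{n'}ᵃ(t) dt = δ_{n,n'} (n+a)!/n!`.
For the latter, expand the Laguerre polynomial of lower degree: by `∫₀^∞ tʲ e^{-t} dt = j!`, the
moments `∫₀^∞ t^{a+k} e^{-t} L_nᵃ(t) dt` with `k ≤ n` are alternating binomial sums, namely
`n`-th forward differences of the degree-`k` polynomial `x ↦ binom(x, k)`; they vanish for `k < n`
and equal `(-1)ⁿ (n+a)!` for `k = n`.
-/

open Set Finset Complex
open scoped Nat fwdDiff

theorem fwdDiff_iter_choose_of_le {k n : ℕ} (h : k ≤ n) :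
    (Δ_[1])^[n] (fun x ↦ x.choose k : ℕ → ℤ) = fun _ ↦ if n = k then 1 else 0 := by
  obtain ⟨d, rfl⟩ := Nat.exists_eq_add_of_le h
  have hk : (Δ_[1])^[k] (fun x ↦ x.choose k : ℕ → ℤ) = fun _ ↦ 1 := by
    simpa using fwdDiff_iter_choose 0 k
  rw [add_comm, Function.iterate_add_apply, hk]
  cases d with
  | zero => simp
  | succ d =>
    rw [Function.iterate_succ_apply, fwdDiff_const,
      Function.iterate_fixed (by simp [fwdDiff_const] : Δ_[1] (fun _ ↦ 0 : ℕ → ℤ) = fun _ ↦ 0)]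
    simp

theorem sum_range_neg_one_pow_mul_choose_mul_choose {k n : ℕ} (h : k ≤ n) (x : ℕ) :
    ∑ j ∈ range (n + 1), (-1 : ℤ) ^ j * n.choose j * (x + j).choose k =
      if n = k then (-1) ^ n else 0 := by
  have hΔ := congr_fun (fwdDiff_iter_choose_of_le h) x
  rw [fwdDiff_iter_eq_sum_shift] at hΔ
  calc ∑ j ∈ range (n + 1), (-1 : ℤ) ^ j * n.choose j * (x + j).choose k
      = (-1) ^ n * ∑ j ∈ range (n + 1),
          ((-1 : ℤ) ^ (n - j) * n.choose j) • ((x + j • 1).choose k : ℤ) := by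
        rw [mul_sum]
        refine sum_congr rfl fun j hj ↦ ?_
        have hjn : j ≤ n := Nat.lt_succ_iff.mp (Finset.mem_range.mp hj)
        rw [smul_eq_mul, smul_eq_mul, mul_one, ← mul_assoc, ← mul_assoc, ← pow_add,
          show n + (n - j) = j + 2 * (n - j) by omega, pow_add, pow_mul]
        simp
    _ = _ := by rw [hΔ]; split_ifs <;> simp

theorem laguerre_natCast (a n : ℕ) (x : ℝ) :
    laguerre a n x =
      ∑ j ∈ range (n + 1), (-1) ^ j * (n + a)! / ((a + j)! * (n - j)! * j !) * x ^ j := by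
  refine sum_congr rfl fun j _ ↦ ?_
  rw [show (n : ℝ) + a + 1 = ((n + a : ℕ) : ℝ) + 1 by push_cast; ring,
    show (a : ℝ) + j + 1 = ((a + j : ℕ) : ℝ) + 1 by push_cast; ring,
    Real.Gamma_nat_eq_factorial, Real.Gamma_nat_eq_factorial]
  ring

theorem integrableOn_pow_mul_exp_neg (m : ℕ) :
    IntegrableOn (fun x : ℝ ↦ x ^ m * Real.exp (-x)) (Ioi 0) := by
  refine (Real.GammaIntegral_convergent (s := m + 1) (by positivity)).congr_fun
    (fun x _ ↦ ?_) measurableSet_Ioi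
  dsimp only
  rw [add_sub_cancel_right, Real.rpow_natCast, mul_comm]

theorem integral_pow_mul_exp_neg (m : ℕ) :
    ∫ x in Ioi 0, x ^ m * Real.exp (-x) = m ! := by
  rw [← Real.Gamma_nat_eq_factorial, Real.Gamma_eq_integral (by positivity)]
  refine setIntegral_congr_fun measurableSet_Ioi (fun x _ ↦ ?_)
  rw [add_sub_cancel_right, Real.rpow_natCast, mul_comm]

theorem integrableOn_pow_mul_exp_neg_mul_sum (b N : ℕ) (c : ℕ → ℝ) :
    IntegrableOn (fun x : ℝ ↦ x ^ b * Real.exp (-x) * ∑ j ∈ range N, c j * x ^ j) (Ioi 0) := by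
  simp_rw [mul_sum]
  refine integrable_finsetSum _ fun j _ ↦ ?_
  refine IntegrableOn.congr_fun ((integrableOn_pow_mul_exp_neg (b + j)).const_mul (c j))
    (fun x _ ↦ ?_) measurableSet_Ioi
  ring

theorem integral_pow_mul_exp_neg_mul_sum (b N : ℕ) (c : ℕ → ℝ) :
    ∫ x in Ioi 0, x ^ b * Real.exp (-x) * ∑ j ∈ range N, c j * x ^ j =
      ∑ j ∈ range N, c j * (b + j)! := by
  have h : ∀ x : ℝ, x ^ b * Real.exp (-x) * ∑ j ∈ range N, c j * x ^ j =
      ∑ j ∈ range N, c j * (x ^ (b + j) * Real.exp (-x)) := fun x ↦ by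
    rw [mul_sum]; exact sum_congr rfl fun j _ ↦ by ring
  simp_rw [h]
  rw [integral_finsetSum _ fun j _ ↦ (integrableOn_pow_mul_exp_neg (b + j)).const_mul (c j)]
  simp_rw [integral_const_mul, integral_pow_mul_exp_neg]

theorem integrableOn_pow_mul_exp_neg_mul_laguerre (a n b : ℕ) :
    IntegrableOn (fun x : ℝ ↦ x ^ b * Real.exp (-x) * laguerre a n x) (Ioi 0) := by
  simp_rw [laguerre_natCast]
  exact integrableOn_pow_mul_exp_neg_mul_sum b (n + 1) _

theorem integral_pow_mul_exp_neg_mul_laguerre (a : ℕ) {k n : ℕ} (h : k ≤ n) :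
    ∫ x in Ioi 0, x ^ (a + k) * Real.exp (-x) * laguerre a n x =
      if n = k then (-1 : ℝ) ^ n * (n + a)! else 0 := by
  simp_rw [laguerre_natCast]
  rw [integral_pow_mul_exp_neg_mul_sum]
  have hcoeff : ∀ j ∈ range (n + 1),
      (-1) ^ j * (n + a)! / ((a + j)! * (n - j)! * j !) * ((a + k + j)! : ℝ) =
        (n + a)! * k ! / n ! * (((-1 : ℤ) ^ j * n.choose j * (a + k + j).choose k : ℤ) : ℝ) := by
    intro j hj
    have hjn : j ≤ n := Nat.lt_succ_iff.mp (Finset.mem_range.mp hj)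
    push_cast
    rw [Nat.cast_choose ℝ hjn, Nat.cast_choose ℝ (by omega : k ≤ a + k + j),
      show a + k + j - k = a + j by omega]
    field_simp
  rw [sum_congr rfl hcoeff, ← mul_sum, ← Int.cast_sum,
    sum_range_neg_one_pow_mul_choose_mul_choose h]
  split_ifs with hnk
  · subst hnk
    push_cast
    field_simp
  · simp

theorem integral_laguerre_mul_laguerre (a n n' : ℕ) :
    ∫ x in Ioi 0, x ^ a * Real.exp (-x) * (laguerre a n x * laguerre a n' x) =
      if n = n' then ((n + a)! / n ! : ℝ) else 0 := by
  wlog h : n' ≤ n generalizing n n'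
  · simp_rw [mul_comm (laguerre a n _), this n' n (by omega), eq_comm (a := n')]
    split_ifs with hn <;> simp [hn]
  have hexpand : ∀ x : ℝ, x ^ a * Real.exp (-x) * (laguerre a n x * laguerre a n' x) =
      ∑ k ∈ range (n' + 1), (-1) ^ k * (n' + a)! / ((a + k)! * (n' - k)! * k !) *
        (x ^ (a + k) * Real.exp (-x) * laguerre a n x) := fun x ↦ by
    rw [laguerre_natCast a n' x, mul_sum, mul_sum]
    exact sum_congr rfl fun k _ ↦ by ring
  simp_rw [hexpand]
  rw [integral_finsetSum _ fun k _ ↦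
    (integrableOn_pow_mul_exp_neg_mul_laguerre a n (a + k)).const_mul _]
  simp_rw [integral_const_mul]
  rw [sum_congr rfl fun k hk ↦ by
    rw [integral_pow_mul_exp_neg_mul_laguerre a
      (h.trans' (Nat.lt_succ_iff.mp (Finset.mem_range.mp hk)))]]
  simp_rw [mul_ite, mul_zero, sum_ite_eq, Finset.mem_range, Nat.lt_succ_iff]
  by_cases hn : n = n'
  · subst hn
    rw [if_pos le_rfl, if_pos rfl, Nat.sub_self, add_comm a n]
    field_simp
    simp [← pow_mul, pow_mul']
  · rw [if_neg (by omega), if_neg hn]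

theorem integral_smul_comp_sq_Ioi {E : Type*} [NormedAddCommGroup E] [NormedSpace ℝ E]
    (g : ℝ → E) : ∫ r in Ioi 0, r • g (r ^ 2) = (2 : ℝ)⁻¹ • ∫ t in Ioi 0, g t := by
  rw [← integral_comp_rpow_Ioi_of_pos (g := g) two_pos, ← integral_smul]
  refine setIntegral_congr_fun measurableSet_Ioi fun r _ ↦ ?_
  norm_num [smul_smul]
  ring_nf

theorem integral_exp_int_mul_mul_I (k : ℤ) :
    ∫ θ in Ioo (-Real.pi) Real.pi, exp (k * θ * I) = if k = 0 then 2 * Real.pi else 0 := by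
  rw [← integral_Ioc_eq_integral_Ioo,
    ← intervalIntegral.integral_of_le (by linarith [Real.pi_pos])]
  split_ifs with hk
  · simp [hk, two_mul]
  · have hkI : (k : ℂ) * I ≠ 0 := by simp [hk]
    simp_rw [mul_right_comm _ _ I]
    rw [integral_exp_mul_complex hkI]
    have hperiodic : exp (k * I * Real.pi) = exp (k * I * (-Real.pi : ℝ)) :=
      exp_eq_exp_iff_exists_int.mpr ⟨k, by push_cast; ring⟩
    rw [hperiodic, sub_self, zero_div, ofReal_zero]

noncomputable def fmnRadial (m : ℤ) (n : ℕ) (r : ℝ) : ℝ :=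
  √(n ! / (Real.pi * (n + m.natAbs)!)) * Real.exp (-r ^ 2 / 2) * r ^ m.natAbs *
    laguerre m.natAbs n (r ^ 2)

theorem ofReal_mul_exp_mul_I_pow (r θ : ℝ) (k : ℕ) :
    (r * exp (θ * I)) ^ k = r ^ k * exp (k * θ * I) := by
  rw [mul_pow, ← Complex.exp_nat_mul, mul_assoc]

theorem fmn_ofReal_mul_exp_mul_I (m : ℤ) (n : ℕ) {r : ℝ} (hr : 0 ≤ r) (θ : ℝ) :
    fmn m n (r * exp (θ * I)) = fmnRadial m n r * exp (m * θ * I) := by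
  have hnorm : ‖(r : ℂ) * exp (θ * I)‖ = r := by
    rw [norm_mul, norm_exp_ofReal_mul_I, norm_real, Real.norm_of_nonneg hr, mul_one]
  have hconj : (starRingEnd ℂ) (r * exp (θ * I)) = r * exp ((-θ : ℝ) * I) := by
    rw [map_mul, conj_ofReal, ← exp_conj, map_mul, conj_ofReal, conj_I]
    push_cast; ring_nf
  rw [fmn, fmnRadial, hnorm]
  split_ifs with hm
  · have hcast : ((m.natAbs : ℕ) : ℂ) = m := by
      rw [← Int.cast_natCast, Int.natAbs_of_nonneg hm]
    rw [ofReal_mul_exp_mul_I_pow, hcast]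
    push_cast; ring
  · have hcast : ((m.natAbs : ℕ) : ℂ) = -m := by
      rw [← Int.cast_natCast, Int.ofNat_natAbs_of_nonpos (by omega), Int.cast_neg]
    rw [hconj, ofReal_mul_exp_mul_I_pow, hcast]
    push_cast; ring_nf

theorem conj_fmn_mul_fmn_polarCoord_symm (m m' : ℤ) (n n' : ℕ) {r : ℝ} (hr : 0 ≤ r) (θ : ℝ) :
    r • ((starRingEnd ℂ) (fmn m n (Complex.polarCoord.symm (r, θ))) *
        fmn m' n' (Complex.polarCoord.symm (r, θ))) =
      ((fmnRadial m n r * fmnRadial m' n' r * r : ℝ) : ℂ) * exp ((m' - m : ℤ) * θ * I) := by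
  have hpolar : Complex.polarCoord.symm (r, θ) = r * exp (θ * I) := by
    rw [Complex.polarCoord_symm_apply, exp_mul_I, ← ofReal_cos, ← ofReal_sin]
  rw [hpolar, fmn_ofReal_mul_exp_mul_I m n hr, fmn_ofReal_mul_exp_mul_I m' n' hr, map_mul,
    conj_ofReal, ← exp_conj, real_smul]
  have hphase : (m' - m : ℤ) * (θ : ℂ) * I = m' * θ * I + (starRingEnd ℂ) (m * θ * I) := by
    simp only [map_mul, map_intCast, conj_ofReal, conj_I]
    push_cast
    ring
  rw [hphase, exp_add]
  push_cast; ring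

theorem integral_fmnRadial_mul_fmnRadial (m : ℤ) (n n' : ℕ) :
    ∫ r in Ioi 0, fmnRadial m n r * fmnRadial m n' r * r =
      if n = n' then (2 * Real.pi)⁻¹ else 0 := by
  set a := m.natAbs
  set c := √(n ! / (Real.pi * (n + a)!))
  set c' := √(n' ! / (Real.pi * (n' + a)!))
  have hsq : ∀ r : ℝ, fmnRadial m n r * fmnRadial m n' r * r =
      r • (c * c' * ((r ^ 2) ^ a * Real.exp (-r ^ 2) *
        (laguerre a n (r ^ 2) * laguerre a n' (r ^ 2)))) := fun r ↦ by
    have hexp : Real.exp (-r ^ 2) = Real.exp (-r ^ 2 / 2) * Real.exp (-r ^ 2 / 2) := by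
      rw [← Real.exp_add]; ring_nf
    rw [fmnRadial, fmnRadial, hexp, ← pow_mul, smul_eq_mul]
    ring
  simp_rw [hsq]
  rw [integral_smul_comp_sq_Ioi fun t ↦
      c * c' * (t ^ a * Real.exp (-t) * (laguerre a n t * laguerre a n' t)),
    integral_const_mul, integral_laguerre_mul_laguerre, smul_eq_mul]
  split_ifs with hn
  · subst hn
    rw [Real.mul_self_sqrt (by positivity)]
    field_simp
  · simp

theorem fmn_orthonormal (m m' : ℤ) (n n' : ℕ) :
    ∫ z : ℂ, (starRingEnd ℂ) (fmn m n z) * fmn m' n' z =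
      if m = m' ∧ n = n' then 1 else 0 := by
  rw [← Complex.integral_comp_polarCoord_symm,
    setIntegral_congr_fun polarCoord.open_target.measurableSet
      fun p hp ↦ conj_fmn_mul_fmn_polarCoord_symm m m' n n' hp.1.le p.2,
    show polarCoord.target = Set.Ioi 0 ×ˢ Set.Ioo (-Real.pi) Real.pi from rfl,
    Measure.volume_eq_prod,
    setIntegral_prod_mul (fun r ↦ ((fmnRadial m n r * fmnRadial m' n' r * r : ℝ) : ℂ))
      (fun θ : ℝ ↦ exp ((m' - m : ℤ) * θ * I)),
    integral_complex_ofReal, integral_exp_int_mul_mul_I]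
  by_cases hm : m = m'
  · subst hm
    rw [sub_self, if_pos rfl, integral_fmnRadial_mul_fmnRadial]
    by_cases hn : n = n'
    · rw [if_pos hn, if_pos ⟨rfl, hn⟩, ← ofReal_mul, inv_mul_cancel₀ (by positivity), ofReal_one]
    · rw [if_neg hn, if_neg fun h ↦ hn h.2, ofReal_zero, zero_mul]
  · rw [if_neg (sub_ne_zero.mpr (Ne.symm hm)), if_neg (fun h ↦ hm h.1)]
    simp
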